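/- Suppose {(W_i, u_i)}_{i=1}^n are i.i.d., W_i is independent of u_i, and X = ι (the all-ones vector). Then under H_0: θ = θ_0, Z'ũ(θ_0) and Z'ũ_π(θ_0) are identically distributed for any fixed permutation π, where Z = M_ι W and ũ(θ_0) = M_ι(y − Yθ_0) = M_ι u; consequently the permutation test PAR_2 based on permuting the entries of the restricted residual vector is exact: E[φ_n^{PAR_2}] = α. -/

import Mathlib

open Finset Matrix MeasureTheory ProbabilityTheory

/-- Permutation AR statistic `PAR₂ = n m̂π' Σ̂π⁻¹ m̂π` built from demeaned instruments `Z`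
and (permuted) restricted residuals `ut`, with `m̂ = n⁻¹ Z'ut` and
`Σ̂ = n⁻¹ ∑ᵢ Zᵢ Zᵢ' utᵢ²`. -/
noncomputable def PAR2stat {n k : ℕ} (Z : Fin n → Fin k → ℝ) (ut : Fin n → ℝ) : ℝ :=
  let m : Fin k → ℝ := fun j => (n : ℝ)⁻¹ * ∑ i, Z i j * ut i
  let S : Matrix (Fin k) (Fin k) ℝ :=
    Matrix.of fun j l => (n : ℝ)⁻¹ * ∑ i, Z i j * Z i l * (ut i) ^ 2
  (n : ℝ) * (m ⬝ᵥ (S⁻¹).mulVec m)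

/-- The (possibly randomized) level-`α` randomization test, as in the standard
randomization-test construction. -/
noncomputable def randTest (n : ℕ) (α : ℝ) (vals : Equiv.Perm (Fin n) → ℝ)
    (obs : ℝ) : ℝ :=
  let N := Nat.factorial n
  let r : ℕ := N - (⌊(N : ℝ) * α⌋).toNat
  let t : ℝ := sInf {x : ℝ | r ≤ (Finset.univ.filter (fun π : Equiv.Perm (Fin n) => vals π ≤ x)).card}
  let Nplus : ℕ := (Finset.univ.filter (fun π : Equiv.Perm (Fin n) => t < vals π)).card
  let N0 : ℕ := (Finset.univ.filter (fun π : Equiv.Perm (Fin n) => vals π = t)).card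
  let a : ℝ := ((N : ℝ) * α - (Nplus : ℝ)) / (N0 : ℝ)
  if t < obs then 1 else if obs = t then a else 0

/-!
Under the null the pairs `(Wᵢ, uᵢ)` are i.i.d. with `Wᵢ ⫫ uᵢ`, so the law of `(W, u)` is
`(⊗ᵢ law Wᵢ) ⊗ (⊗ᵢ law uᵢ)`, whose second factor is invariant under permuting coordinates: for
every permutation `σ`, `(W, u ∘ σ)` has the law of `(W, u)`. Demeaning commutes with permutations,
which gives the first claim. For the second, the permutation statistics of `(W, u ∘ σ)` are those
of `(W, u)` reindexed by `π ↦ σ π`, so the threshold and the tie weight of the test `φ` do not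
depend on `σ`, and `∑_σ φ(W, u ∘ σ)` is the number of statistics above the threshold plus the
weighted number of ties, which is `n! α` by the choice of the tie weight. The `n!` summands all
have the same mean, hence `E φ(W, u) = α`.
-/

lemma card_filter_comp_equiv {G : Type*} [Fintype G] (e : G ≃ G) (q : G → Prop)
    [DecidablePred q] : #{g | q (e g)} = #{g | q g} := by
  simp only [card_filter]
  exact e.sum_comp fun g => if q g then 1 else 0

lemma exists_forall_le_card_filter_le_iff {G : Type*} [Fintype G] (v : G → ℝ) {r : ℕ}
    (hr : 1 ≤ r) (hrG : r ≤ Fintype.card G) :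
    ∃ g₀, ∀ x, r ≤ #{g | v g ≤ x} ↔ v g₀ ≤ x := by
  classical
  have hmono : Monotone fun x => #{g | v g ≤ x} := fun x y hxy =>
    card_le_card fun g hg => by simp only [mem_filter] at hg ⊢; exact ⟨hg.1, hg.2.trans hxy⟩
  let T : Finset G := {g | r ≤ #{g' | v g' ≤ v g}}
  have exists_mem_T {x : ℝ} (hx : r ≤ #{g | v g ≤ x}) : ∃ g ∈ T, v g ≤ x := by
    obtain ⟨g₁, hg₁, hmax⟩ := exists_max_image {g | v g ≤ x} v (card_pos.mp (by omega))
    refine ⟨g₁, mem_filter.mpr ⟨mem_univ _, hx.trans (card_le_card fun g hg => ?_)⟩,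
      (mem_filter.mp hg₁).2⟩
    simp only [mem_filter, mem_univ, true_and]
    exact hmax g hg
  obtain ⟨gmax, -, hgmax⟩ := exists_max_image univ v
    (univ_nonempty_iff.mpr (Fintype.card_pos_iff.mp (by omega)))
  have hgmax_card : r ≤ #{g | v g ≤ v gmax} := by
    rwa [filter_true_of_mem fun g _ => hgmax g (mem_univ g), card_univ]
  obtain ⟨g, hgT, -⟩ := exists_mem_T hgmax_card
  obtain ⟨g₀, hg₀T, hg₀min⟩ := T.exists_min_image v ⟨g, hgT⟩
  refine ⟨g₀, fun x => ⟨fun hx => ?_, fun hx => (mem_filter.mp hg₀T).2.trans (hmono hx)⟩⟩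
  obtain ⟨g₁, hg₁T, hg₁x⟩ := exists_mem_T hx
  exact (hg₀min g₁ hg₁T).trans hg₁x

lemma measurable_card_filter {X G : Type*} [MeasurableSpace X] [Fintype G] {p : X → G → Prop}
    [∀ x, DecidablePred (p x)] (hp : ∀ g, MeasurableSet {x | p x g}) :
    Measurable fun x => #{g | p x g} := by
  simp only [card_filter]
  exact Finset.measurable_sum _ fun g _ => Measurable.ite (hp g) measurable_const measurable_const

section RandomizationTest

variable {n : ℕ} {α : ℝ}

noncomputable def randTestRank (n : ℕ) (α : ℝ) : ℕ :=
  Nat.factorial n - (⌊(Nat.factorial n : ℝ) * α⌋).toNat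

noncomputable def randTestThreshold (n : ℕ) (α : ℝ) (vals : Equiv.Perm (Fin n) → ℝ) : ℝ :=
  sInf {x : ℝ | randTestRank n α ≤ #{π | vals π ≤ x}}

noncomputable def randTestTieWeight (n : ℕ) (α : ℝ) (vals : Equiv.Perm (Fin n) → ℝ) : ℝ :=
  ((Nat.factorial n : ℝ) * α - #{π | randTestThreshold n α vals < vals π})
    / #{π | vals π = randTestThreshold n α vals}

lemma randTest_eq_ite (vals : Equiv.Perm (Fin n) → ℝ) (obs : ℝ) :
    randTest n α vals obs =
      if randTestThreshold n α vals < obs then 1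
      else if obs = randTestThreshold n α vals then randTestTieWeight n α vals else 0 :=
  rfl

lemma one_le_randTestRank (hα : α < 1) : 1 ≤ randTestRank n α := by
  have hfloor : (⌊(Nat.factorial n : ℝ) * α⌋).toNat < Nat.factorial n := by
    rw [Int.toNat_lt' (Nat.factorial_pos n), Int.floor_lt]
    push_cast
    exact mul_lt_of_lt_one_right (by positivity) hα
  unfold randTestRank
  omega

lemma exists_randTestThreshold_eq (hα : α < 1) (vals : Equiv.Perm (Fin n) → ℝ) :
    ∃ π₀, randTestThreshold n α vals = vals π₀ ∧
      ∀ x, randTestRank n α ≤ #{π | vals π ≤ x} ↔ vals π₀ ≤ x := by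
  obtain ⟨π₀, hπ₀⟩ := exists_forall_le_card_filter_le_iff vals (one_le_randTestRank hα)
    (by rw [Fintype.card_perm, Fintype.card_fin]; exact Nat.sub_le _ _)
  refine ⟨π₀, ?_, hπ₀⟩
  rw [randTestThreshold, show {x | randTestRank n α ≤ #{π | vals π ≤ x}} = Set.Ici (vals π₀) from
    Set.ext hπ₀, csInf_Ici]

lemma randTestThreshold_le_iff (hα : α < 1) (vals : Equiv.Perm (Fin n) → ℝ) (c : ℝ) :
    randTestThreshold n α vals ≤ c ↔ randTestRank n α ≤ #{π | vals π ≤ c} := by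
  obtain ⟨π₀, hπ₀, hiff⟩ := exists_randTestThreshold_eq hα vals
  rw [hπ₀, hiff]

lemma randTest_comp_equiv (vals : Equiv.Perm (Fin n) → ℝ) (e : Equiv.Perm (Equiv.Perm (Fin n))) :
    randTest n α (vals ∘ e) = randTest n α vals := by
  have hthreshold : randTestThreshold n α (vals ∘ e) = randTestThreshold n α vals := by
    unfold randTestThreshold
    congr 1
    ext x
    exact iff_of_eq (congrArg _ (card_filter_comp_equiv e fun π => vals π ≤ x))
  funext obs
  simp only [randTest_eq_ite, randTestTieWeight, hthreshold, Function.comp_apply,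
    card_filter_comp_equiv e fun π => randTestThreshold n α vals < vals π,
    card_filter_comp_equiv e fun π => vals π = randTestThreshold n α vals]

lemma randTest_eq_add (vals : Equiv.Perm (Fin n) → ℝ) (obs : ℝ) :
    randTest n α vals obs = (if randTestThreshold n α vals < obs then 1 else 0)
      + randTestTieWeight n α vals * if obs = randTestThreshold n α vals then 1 else 0 := by
  rw [randTest_eq_ite]
  split_ifs <;> simp_all

lemma sum_randTest_self (hα : α < 1) (vals : Equiv.Perm (Fin n) → ℝ) :
    ∑ σ, randTest n α vals (vals σ) = Nat.factorial n * α := by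
  obtain ⟨π₀, hπ₀, -⟩ := exists_randTestThreshold_eq hα vals
  have hties : (#{π | vals π = randTestThreshold n α vals} : ℝ) ≠ 0 :=
    Nat.cast_ne_zero.mpr (card_ne_zero_of_mem (mem_filter.mpr ⟨mem_univ π₀, hπ₀.symm⟩))
  simp only [randTest_eq_add, sum_add_distrib, ← mul_sum, sum_boole, randTestTieWeight,
    div_mul_cancel₀ _ hties]
  ring

lemma abs_randTest_le (vals : Equiv.Perm (Fin n) → ℝ) (obs : ℝ) :
    |randTest n α vals obs| ≤ 1 + (Nat.factorial n * |α| + Nat.factorial n) := by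
  have hcount : (#{π | randTestThreshold n α vals < vals π} : ℝ) ≤ Nat.factorial n := by
    exact_mod_cast (card_filter_le _ _).trans_eq
      (by rw [card_univ, Fintype.card_perm, Fintype.card_fin])
  have hweight : |randTestTieWeight n α vals| ≤ Nat.factorial n * |α| + Nat.factorial n := by
    rcases Nat.eq_zero_or_pos #{π | vals π = randTestThreshold n α vals} with hties | hties
    · simp only [randTestTieWeight, hties, Nat.cast_zero, div_zero, abs_zero]
      positivity
    calc |randTestTieWeight n α vals|
        ≤ |Nat.factorial n * α - #{π | randTestThreshold n α vals < vals π}| := by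
          rw [randTestTieWeight, abs_div, Nat.abs_cast]
          exact div_le_self (abs_nonneg _) (by exact_mod_cast hties)
      _ ≤ Nat.factorial n * |α| + Nat.factorial n := by
          refine (abs_sub _ _).trans (add_le_add (by rw [abs_mul, Nat.abs_cast]) ?_)
          rwa [Nat.abs_cast]
  have hbound : (0 : ℝ) ≤ Nat.factorial n * |α| + Nat.factorial n := by positivity
  rw [randTest_eq_ite]
  split_ifs
  · rw [abs_one]; linarith
  · linarith
  · rw [abs_zero]; linarith

variable {X : Type*} [MeasurableSpace X] {vals : X → Equiv.Perm (Fin n) → ℝ}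

lemma measurable_randTestThreshold (hα : α < 1) (hvals : ∀ π, Measurable fun x => vals x π) :
    Measurable fun x => randTestThreshold n α (vals x) := by
  refine measurable_of_Iic fun c => ?_
  simp only [Set.preimage, Set.mem_Iic, randTestThreshold_le_iff hα]
  exact measurable_card_filter (fun π => measurableSet_le (hvals π) measurable_const)
    (measurableSet_Ici (a := randTestRank n α))

lemma measurable_randTest (hα : α < 1) (hvals : ∀ π, Measurable fun x => vals x π)
    {obs : X → ℝ} (hobs : Measurable obs) :
    Measurable fun x => randTest n α (vals x) (obs x) := by
  have hthreshold := measurable_randTestThreshold hα hvals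
  have hweight : Measurable fun x => randTestTieWeight n α (vals x) :=
    (measurable_const.sub (measurable_from_top.comp (measurable_card_filter fun π =>
      measurableSet_lt hthreshold (hvals π)))).div
      (measurable_from_top.comp (measurable_card_filter fun π =>
        measurableSet_eq_fun (hvals π) hthreshold))
  simp only [randTest_eq_ite]
  exact Measurable.ite (measurableSet_lt hthreshold hobs) measurable_const
    (Measurable.ite (measurableSet_eq_fun hobs hthreshold) hweight measurable_const)

end RandomizationTest

lemma Measurable.matrix_inv_apply {X ι : Type*} [MeasurableSpace X] [Fintype ι] [DecidableEq ι]
    {M : X → ι → ι → ℝ} (hM : Measurable M) (i j : ι) :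
    Measurable fun x => (Matrix.of (M x))⁻¹ i j := by
  simp only [Matrix.inv_def, Matrix.smul_apply, Ring.inverse_eq_inv', smul_eq_mul]
  have hdet : Continuous fun A : ι → ι → ℝ => (Matrix.of A).det := continuous_id.matrix_det
  have hadj : Continuous fun A : ι → ι → ℝ => (Matrix.of A).adjugate i j :=
    continuous_id.matrix_adjugate.matrix_elem i j
  exact (hdet.measurable.comp hM).inv.mul (hadj.measurable.comp hM)

lemma measurable_PAR2stat {n k : ℕ} :
    Measurable fun p : (Fin n → Fin k → ℝ) × (Fin n → ℝ) => PAR2stat p.1 p.2 := by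
  have hmean : Measurable fun p : (Fin n → Fin k → ℝ) × (Fin n → ℝ) =>
      fun j => (n : ℝ)⁻¹ * ∑ i, p.1 i j * p.2 i := by fun_prop
  have hcov : Measurable fun p : (Fin n → Fin k → ℝ) × (Fin n → ℝ) =>
      fun j l => (n : ℝ)⁻¹ * ∑ i, p.1 i j * p.1 i l * p.2 i ^ 2 := by fun_prop
  have hinv := hcov.matrix_inv_apply
  simp only [PAR2stat, dotProduct, mulVec]
  exact (Finset.measurable_sum _ fun j _ => ((measurable_pi_apply j).comp hmean).mul
    (Finset.measurable_sum _ fun l _ =>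
      (hinv j l).mul ((measurable_pi_apply l).comp hmean))).const_mul _

noncomputable def parStat {n k : ℕ} (w : Fin n → Fin k → ℝ) (x : Fin n → ℝ)
    (π : Equiv.Perm (Fin n)) : ℝ :=
  PAR2stat (fun i j => w i j - (n : ℝ)⁻¹ * ∑ l, w l j) (fun i => x (π i) - (n : ℝ)⁻¹ * ∑ l, x l)

noncomputable def parTest (n k : ℕ) (α : ℝ) (p : (Fin n → Fin k → ℝ) × (Fin n → ℝ)) : ℝ :=
  randTest n α (parStat p.1 p.2) (parStat p.1 p.2 1)

lemma parStat_comp_perm {n k : ℕ} (w : Fin n → Fin k → ℝ) (x : Fin n → ℝ)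
    (σ : Equiv.Perm (Fin n)) : parStat w (x ∘ σ) = parStat w x ∘ Equiv.mulLeft σ := by
  funext π
  simp only [parStat, Function.comp_apply, Equiv.coe_mulLeft, Equiv.Perm.mul_apply,
    Equiv.sum_comp σ x]

lemma sum_parTest_comp_perm {n k : ℕ} {α : ℝ} (hα : α < 1) (w : Fin n → Fin k → ℝ)
    (x : Fin n → ℝ) : ∑ σ : Equiv.Perm (Fin n), parTest n k α (w, x ∘ σ) = Nat.factorial n * α := by
  have hterm (σ : Equiv.Perm (Fin n)) :
      parTest n k α (w, x ∘ σ) = randTest n α (parStat w x) (parStat w x σ) := by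
    simp only [parTest]
    rw [parStat_comp_perm, randTest_comp_equiv, Function.comp_apply, Equiv.coe_mulLeft]
    simp only [mul_one]
  rw [sum_congr rfl fun σ _ => hterm σ]
  exact sum_randTest_self hα _

lemma measurable_parStat {n k : ℕ} (π : Equiv.Perm (Fin n)) :
    Measurable fun p : (Fin n → Fin k → ℝ) × (Fin n → ℝ) => parStat p.1 p.2 π :=
  measurable_PAR2stat.comp (f := fun p : (Fin n → Fin k → ℝ) × (Fin n → ℝ) =>
    ((fun i j => p.1 i j - (n : ℝ)⁻¹ * ∑ l, p.1 l j), fun i => p.2 (π i) - (n : ℝ)⁻¹ * ∑ l, p.2 l))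
    (by fun_prop)

lemma measurable_parTest {n k : ℕ} {α : ℝ} (hα : α < 1) : Measurable (parTest n k α) :=
  measurable_randTest hα (measurable_parStat (k := k)) (measurable_parStat (k := k) 1)

lemma MeasureTheory.Measure.pi_map_comp_perm {ι B : Type*} [Fintype ι] [MeasurableSpace B]
    (μ : ι → Measure B) [∀ i, SigmaFinite (μ i)] (σ : Equiv.Perm ι) (hμ : ∀ i, μ (σ i) = μ i) :
    (Measure.pi μ).map (fun y => y ∘ σ) = Measure.pi μ := by
  have h := Measure.pi_map_piCongrLeft σ.symm μ
  have hμ' : (fun i => μ (σ.symm i)) = μ := funext fun i => by simpa using (hμ (σ.symm i)).symm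
  rw [hμ'] at h
  convert h using 2
  funext y i
  simp [MeasurableEquiv.coe_piCongrLeft, Equiv.piCongrLeft_apply_eq_cast]

section Independence

variable {Ω ι A B : Type*} [MeasurableSpace Ω] {P : Measure Ω} [IsProbabilityMeasure P]
  [Fintype ι] [MeasurableSpace A] [MeasurableSpace B] {X : Ω → ι → A} {Y : Ω → ι → B}

lemma map_prod_eq_pi_prod_pi (hX : Measurable X) (hY : Measurable Y)
    (hind : iIndepFun (fun i ω => (X ω i, Y ω i)) P)
    (hXY : ∀ i, IndepFun (fun ω => X ω i) (fun ω => Y ω i) P) :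
    P.map (fun ω => (X ω, Y ω))
      = (Measure.pi fun i => P.map fun ω => X ω i).prod
          (Measure.pi fun i => P.map fun ω => Y ω i) := by
  have hXi : ∀ i, Measurable fun ω => X ω i := fun i => (measurable_pi_apply i).comp hX
  have hYi : ∀ i, Measurable fun ω => Y ω i := fun i => (measurable_pi_apply i).comp hY
  have hpairs : P.map (fun ω i => (X ω i, Y ω i))
      = Measure.pi fun i => (P.map fun ω => X ω i).prod (P.map fun ω => Y ω i) := by
    rw [(iIndepFun_iff_map_fun_eq_pi_map fun i => ((hXi i).prodMk (hYi i)).aemeasurable).mp hind]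
    congr 1; funext i
    exact (indepFun_iff_map_prod_eq_prod_map_map (hXi i).aemeasurable
      (hYi i).aemeasurable).mp (hXY i)
  have hE := measurePreserving_arrowProdEquivProdArrow A B ι
    (fun i => P.map fun ω => X ω i) (fun i => P.map fun ω => Y ω i)
  rw [← hE.map_eq, ← hpairs, Measure.map_map hE.measurable (by fun_prop)]
  rfl

lemma identDistrib_prod_comp_perm (hX : Measurable X) (hY : Measurable Y)
    (hind : iIndepFun (fun i ω => (X ω i, Y ω i)) P)
    (hXY : ∀ i, IndepFun (fun ω => X ω i) (fun ω => Y ω i) P)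
    (hYid : ∀ i j, IdentDistrib (fun ω => Y ω i) (fun ω => Y ω j) P P) (σ : Equiv.Perm ι) :
    IdentDistrib (fun ω => (X ω, Y ω ∘ σ)) (fun ω => (X ω, Y ω)) P P where
  aemeasurable_fst := by fun_prop
  aemeasurable_snd := by fun_prop
  map_eq := by
    have hperm : Measurable fun y : ι → B => y ∘ σ := by fun_prop
    rw [show (fun ω => (X ω, Y ω ∘ σ)) = Prod.map id (· ∘ σ) ∘ fun ω => (X ω, Y ω) from rfl,
      ← Measure.map_map (measurable_id.prodMap hperm) (hX.prodMk hY),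
      map_prod_eq_pi_prod_pi hX hY hind hXY, ← Measure.map_prod_map _ _ measurable_id hperm,
      Measure.map_id, Measure.pi_map_comp_perm _ σ fun i => (hYid (σ i) i).map_eq]

end Independence

lemma integral_eq_of_sum_eq_card_mul {Ω ι : Type*} [MeasurableSpace Ω] {P : Measure Ω}
    [IsProbabilityMeasure P] [Fintype ι] {f : ι → Ω → ℝ} {c : ℝ} (i₀ : ι)
    (hf : ∀ i, Integrable (f i) P) (hf_eq : ∀ i, ∫ ω, f i ω ∂P = ∫ ω, f i₀ ω ∂P)
    (hsum : ∀ ω, ∑ i, f i ω = Fintype.card ι * c) :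
    ∫ ω, f i₀ ω ∂P = c := by
  have hcard : (Fintype.card ι : ℝ) ≠ 0 := Nat.cast_ne_zero.mpr (Fintype.card_pos_iff.mpr ⟨i₀⟩).ne'
  refine mul_left_cancel₀ hcard ?_
  calc (Fintype.card ι : ℝ) * ∫ ω, f i₀ ω ∂P = ∑ i, ∫ ω, f i ω ∂P := by
        simp only [hf_eq, sum_const, card_univ, nsmul_eq_mul]
    _ = ∫ ω, ∑ i, f i ω ∂P := (integral_finsetSum _ fun i _ => hf i).symm
    _ = Fintype.card ι * c := by simp only [hsum, integral_const, probReal_univ, one_smul]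

theorem stmt5_general {Ω : Type*} [MeasurableSpace Ω] (P : Measure Ω) [IsProbabilityMeasure P]
    (n k : ℕ)
    (W : Ω → Fin n → Fin k → ℝ) (u : Ω → Fin n → ℝ)
    (hWmeas : Measurable W) (humeas : Measurable u)
    (hid : ∀ i j : Fin n,
      IdentDistrib (fun ω => (W ω i, u ω i)) (fun ω => (W ω j, u ω j)) P P)
    (hiind : iIndepFun (fun i ω => (W ω i, u ω i)) P)
    (hWu : ∀ i : Fin n, IndepFun (fun ω => W ω i) (fun ω => u ω i) P)
    (α : ℝ) (hα : α ∈ Set.Ioo (0 : ℝ) 1) :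
    (∀ π : Equiv.Perm (Fin n),
        Measure.map (fun ω => fun j : Fin k =>
            ∑ i, (W ω i j - (n : ℝ)⁻¹ * ∑ l, W ω l j)
              * (u ω (π i) - (n : ℝ)⁻¹ * ∑ l, u ω l)) P
          = Measure.map (fun ω => fun j : Fin k =>
              ∑ i, (W ω i j - (n : ℝ)⁻¹ * ∑ l, W ω l j)
                * (u ω i - (n : ℝ)⁻¹ * ∑ l, u ω l)) P)
    ∧ ∫ ω, randTest n α
          (fun π => PAR2stat (fun i j => W ω i j - (n : ℝ)⁻¹ * ∑ l, W ω l j)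
            (fun i => u ω (π i) - (n : ℝ)⁻¹ * ∑ l, u ω l))
          (PAR2stat (fun i j => W ω i j - (n : ℝ)⁻¹ * ∑ l, W ω l j)
            (fun i => u ω i - (n : ℝ)⁻¹ * ∑ l, u ω l)) ∂P = α := by
  have hlaw (σ : Equiv.Perm (Fin n)) :
      IdentDistrib (fun ω => (W ω, u ω ∘ σ)) (fun ω => (W ω, u ω)) P P :=
    identDistrib_prod_comp_perm hWmeas humeas hiind hWu (fun i j => (hid i j).comp measurable_snd) σ
  refine ⟨fun π => ?_, ?_⟩
  · have hZu : Measurable fun p : (Fin n → Fin k → ℝ) × (Fin n → ℝ) => fun j =>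
        ∑ i, (p.1 i j - (n : ℝ)⁻¹ * ∑ l, p.1 l j) * (p.2 i - (n : ℝ)⁻¹ * ∑ l, p.2 l) := by
      fun_prop
    simpa only [Function.comp_def, Equiv.sum_comp] using ((hlaw π).comp hZu).map_eq
  · have hφ := measurable_parTest (n := n) (k := k) hα.2
    have hexact := integral_eq_of_sum_eq_card_mul (P := P)
      (f := fun (σ : Equiv.Perm (Fin n)) ω => parTest n k α (W ω, u ω ∘ σ)) (c := α) 1
      (fun σ => .of_bound (hφ.comp_aemeasurable (hlaw σ).aemeasurable_fst).aestronglyMeasurable _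
        (ae_of_all _ fun ω => abs_randTest_le _ _))
      (fun σ => ((hlaw σ).comp hφ).integral_eq)
      (fun ω => by rw [Fintype.card_perm, Fintype.card_fin]; exact sum_parTest_comp_perm hα.2 _ _)
    simp only [Equiv.Perm.coe_one, Function.comp_id] at hexact
    exact hexact

/-- Exactness of the `PAR₂` test when `X = ι`: if `(Wᵢ, uᵢ)` are i.i.d. with `Wᵢ`
independent of `uᵢ`, then under the null `Z'ũ` and `Z'ũ_π` are identically distributed
(`Z = M_ι W`, `ũ = M_ι u`), and the randomization test based on permuting the entries of
the restricted residual vector has exact size `α`. -/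
theorem stmt5 {Ω : Type*} [MeasurableSpace Ω] (P : Measure Ω) [IsProbabilityMeasure P]
    (n k : ℕ) (hn : 0 < n)
    (W : Ω → Fin n → Fin k → ℝ) (u : Ω → Fin n → ℝ)
    (hWmeas : Measurable W) (humeas : Measurable u)
    (hid : ∀ i j : Fin n,
      IdentDistrib (fun ω => (W ω i, u ω i)) (fun ω => (W ω j, u ω j)) P P)
    (hiind : iIndepFun (fun i ω => (W ω i, u ω i)) P)
    (hWu : ∀ i : Fin n, IndepFun (fun ω => W ω i) (fun ω => u ω i) P)
    (α : ℝ) (hα : α ∈ Set.Ioo (0 : ℝ) 1) :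
    (∀ π : Equiv.Perm (Fin n),
        Measure.map (fun ω => fun j : Fin k =>
            ∑ i, (W ω i j - (n : ℝ)⁻¹ * ∑ l, W ω l j)
              * (u ω (π i) - (n : ℝ)⁻¹ * ∑ l, u ω l)) P
          = Measure.map (fun ω => fun j : Fin k =>
              ∑ i, (W ω i j - (n : ℝ)⁻¹ * ∑ l, W ω l j)
                * (u ω i - (n : ℝ)⁻¹ * ∑ l, u ω l)) P)
    ∧ ∫ ω, randTest n α
          (fun π => PAR2stat (fun i j => W ω i j - (n : ℝ)⁻¹ * ∑ l, W ω l j)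
            (fun i => u ω (π i) - (n : ℝ)⁻¹ * ∑ l, u ω l))
          (PAR2stat (fun i j => W ω i j - (n : ℝ)⁻¹ * ∑ l, W ω l j)
            (fun i => u ω i - (n : ℝ)⁻¹ * ∑ l, u ω l)) ∂P = α :=
  stmt5_general P n k W u hWmeas humeas hid hiind hWu α hα
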